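/- arXiv:math/0609420 — 3 statements merged into one kernel-verified Lean document; each statement's English description precedes it below -/
import Mathlib

section
/- Let X be a simplicial set satisfying Kan(m,j) for all m ≥ 1 and 0 ≤ j ≤ m, and Kan!(m,j) for all m ≥ 3 and 0 ≤ j ≤ m (a 2-groupoid). Then the bigons of X form a groupoid with set of objects X₁, in which: for x, y ∈ X₁ the morphisms from x to y are the 2-simplices η ∈ X₂ with d₁η = x, d₀η = y and d₂η = s₀(d₁x); the identity at x is the degenerate 2-simplex s₀x; and the composite of η₂ : x → x' followed by η₀ : x' → x'' is d₁θ, where θ is the unique 3-simplex of X with d₀θ = η₀, d₂θ = η₂ and d₃θ = s₀(s₀(d₁x)). In particular such a θ exists and is unique, d₁θ is again a morphism from x to x'', this composition is associative, s₀x is a two-sided unit, and every such morphism has a two-sided inverse. -/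
open CategoryTheory Simplicial

/-- `Kan(m,j)`: every map from the horn `Λ[m,j]` to `X` extends along the horn
inclusion to a map `Δ[m] ⟶ X`. -/
def SSet.KanCond (X : SSet.{u}) (m : ℕ) (j : Fin (m + 1)) : Prop :=
  ∀ σ₀ : (Λ[m, j] : SSet) ⟶ X, ∃ σ : Δ[m] ⟶ X, σ₀ = Λ[m, j].ι ≫ σ

/-- `Kan!(m,j)`: every map from the horn `Λ[m,j]` to `X` extends *uniquely* along the
horn inclusion to a map `Δ[m] ⟶ X`. -/
def SSet.KanCondUnique (X : SSet.{u}) (m : ℕ) (j : Fin (m + 1)) : Prop :=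
  ∀ σ₀ : (Λ[m, j] : SSet) ⟶ X, ∃! σ : Δ[m] ⟶ X, σ₀ = Λ[m, j].ι ≫ σ

/-- `η` is a bigon of `X` regarded as a morphism from the 1-simplex `x` to the
1-simplex `y`: its `d₁`-face is `x`, its `d₀`-face is `y`, and its `d₂`-face is the
degenerate edge at the source vertex of `x`. -/
def SSet.IsBigonFrom (X : SSet.{u}) (x y : X _⦋1⦌) (η : X _⦋2⦌) : Prop :=
  X.δ 1 η = x ∧ X.δ 0 η = y ∧ X.δ 2 η = X.σ 0 (X.δ 1 x)

/-- `η` is the composite of the bigon `η₂` followed by the bigon `η₀`: there is a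
3-simplex `θ` with `d₀ θ = η₀`, `d₂ θ = η₂`, `d₃ θ` the doubly degenerate 2-simplex
at the source vertex of the source 1-simplex of `η₂`, and `d₁ θ = η`. -/
def SSet.IsBigonComp (X : SSet.{u}) (η₂ η₀ η : X _⦋2⦌) : Prop :=
  ∃ θ : X _⦋3⦌, X.δ 0 θ = η₀ ∧ X.δ 2 θ = η₂ ∧
    X.δ 3 θ = X.σ 0 (X.σ 0 (X.δ 1 (X.δ 1 η₂))) ∧ X.δ 1 θ = η

/-!
A composite of bigons `η₂ : x → x'` and `η₀ : x' → x''` is the `d₁`-face of a filler of the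
`(3,1)`-horn `(η₀, _, η₂, s₀s₀v)`, `v` the common source vertex, and Kan!(3,1) makes that filler
unique. The units are witnessed by the degenerate 3-simplices `s₀f` and `s₁f`. For associativity,
the 3-simplices computing `g ∘ f`, `h ∘ g` and `(h ∘ g) ∘ f`, together with `s₀s₀s₀v`, form a
`(4,1)`-horn; the `d₁`-face of a filler has faces `(h, (h ∘ g) ∘ f, g ∘ f, s₀s₀v)`, so by
uniqueness it is the 3-simplex computing `h ∘ (g ∘ f)`. Filling the `(3,0)`-horn
`(s₀x, f, s₀s₀v)` gives a `g` with `g ∘ f = id`; doing this twice and using associativity shows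
that `g` is a two-sided inverse.
-/

namespace SSet

variable {X : SSet.{u}}

section FaceCalculus

variable {n : ℕ}

/-! Mathlib's simplicial identities with every index a free variable, so that they rewrite faces
and degeneracies indexed by numerals; the side conditions on the indices are checked by `decide`. -/

theorem δ_comp_δ_apply_of_eq (i j : Fin (n + 2)) (k l : Fin (n + 3)) (x : X _⦋n + 2⦌)
    (hk : k = j.succ := by decide) (hl : l = i.castSucc := by decide)
    (H : i ≤ j := by decide) : X.δ i (X.δ k x) = X.δ j (X.δ l x) := by
  subst hk hl
  exact δ_comp_δ_apply H x

theorem δ_comp_σ_self_apply_of_eq (j : Fin (n + 2)) (i : Fin (n + 1)) (x : X _⦋n⦌)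
    (H : j = i.castSucc := by decide) : X.δ j (X.σ i x) = x :=
  δ_comp_σ_self'_apply H x

theorem δ_comp_σ_succ_apply_of_eq (j : Fin (n + 2)) (i : Fin (n + 1)) (x : X _⦋n⦌)
    (H : j = i.succ := by decide) : X.δ j (X.σ i x) = x :=
  δ_comp_σ_succ'_apply H x

theorem δ_comp_σ_of_le_apply_of_eq (i : Fin (n + 2)) (j : Fin (n + 1)) (k : Fin (n + 3))
    (l : Fin (n + 2)) (x : X _⦋n + 1⦌) (hk : k = i.castSucc := by decide)
    (hl : l = j.succ := by decide) (H : i ≤ j.castSucc := by decide) :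
    X.δ k (X.σ l x) = X.σ j (X.δ i x) := by
  subst hk hl
  exact δ_comp_σ_of_le_apply H x

theorem δ_comp_σ_of_gt_apply_of_eq (i : Fin (n + 2)) (j : Fin (n + 1)) (k : Fin (n + 3))
    (l : Fin (n + 2)) (x : X _⦋n + 1⦌) (hk : k = i.succ := by decide)
    (hl : l = j.castSucc := by decide) (H : j.castSucc < i := by decide) :
    X.δ k (X.σ l x) = X.σ j (X.δ i x) := by
  subst hk hl
  exact δ_comp_σ_of_gt_apply H x

theorem σ_comp_σ_apply_of_eq (i j : Fin (n + 1)) (k l : Fin (n + 2)) (x : X _⦋n⦌)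
    (hk : k = i.castSucc := by decide) (hl : l = j.succ := by decide)
    (H : i ≤ j := by decide) : X.σ k (X.σ j x) = X.σ l (X.σ i x) := by
  subst hk hl
  exact σ_comp_σ_apply H x

end FaceCalculus

theorem KanCondUnique.kanCond {m : ℕ} {j : Fin (m + 1)} (h : X.KanCondUnique m j) :
    X.KanCond m j :=
  fun σ₀ ↦ (h σ₀).exists

theorem exists_δ_eq_of_kanCond {n : ℕ} {i : Fin (n + 3)} (hK : X.KanCond (n + 2) i)
    (y : Fin (n + 3) → X _⦋n + 1⦌)
    (hy : ∀ (j k : Fin (n + 3)) (_ : j ≠ i) (_ : k ≠ i) (hjk : j < k),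
      X.δ (k.pred (Fin.ne_zero_of_lt hjk)) (y j) =
        X.δ (j.castPred (Fin.ne_last_of_lt hjk)) (y k)) :
    ∃ z : X _⦋n + 2⦌, ∀ j ≠ i, X.δ j z = y j := by
  have hf : horn.IsCompatible (fun j (_ : j ≠ i) ↦ yonedaEquiv.symm (y j)) := by
    intro j k hj hk hjk
    simp only [stdSimplex.δ_comp_yonedaEquiv_symm, hy j k hj hk hjk]
  obtain ⟨σ, hσ⟩ := hK hf.desc
  refine ⟨yonedaEquiv σ, fun j hj ↦ ?_⟩
  rw [← stdSimplex.yonedaEquiv_δ_comp, ← horn.ι_ι i j hj, Category.assoc, ← hσ, hf.ι_desc,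
    Equiv.apply_symm_apply]

theorem eq_of_δ_eq_of_kanCondUnique {n : ℕ} {i : Fin (n + 2)} (hK : X.KanCondUnique (n + 1) i)
    {z z' : X _⦋n + 1⦌} (h : ∀ j ≠ i, X.δ j z = X.δ j z') : z = z' := by
  have hσ : Λ[n + 1, i].ι ≫ yonedaEquiv.symm z = Λ[n + 1, i].ι ≫ yonedaEquiv.symm z' :=
    horn.hom_ext' fun j hj ↦ by
      rw [horn.ι_ι_assoc, horn.ι_ι_assoc, stdSimplex.δ_comp_yonedaEquiv_symm,
        stdSimplex.δ_comp_yonedaEquiv_symm, h j hj]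
  exact yonedaEquiv.symm.injective ((hK _).unique rfl hσ)

theorem exists_filler_horn₃₀ (hK : X.KanCond 3 0) (y₁ y₂ y₃ : X _⦋2⦌)
    (h₁₂ : X.δ 1 y₁ = X.δ 1 y₂) (h₁₃ : X.δ 2 y₁ = X.δ 1 y₃) (h₂₃ : X.δ 2 y₂ = X.δ 2 y₃) :
    ∃ z : X _⦋3⦌, X.δ 1 z = y₁ ∧ X.δ 2 z = y₂ ∧ X.δ 3 z = y₃ := by
  obtain ⟨z, hz⟩ := exists_δ_eq_of_kanCond hK ![y₁, y₁, y₂, y₃] <| by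
    intro j k hj hk hjk
    fin_cases j <;> fin_cases k <;> simp [Fin.ext_iff, Fin.lt_def] at hj hk hjk ⊢ <;> assumption
  exact ⟨z, hz 1 (by decide), hz 2 (by decide), hz 3 (by decide)⟩

theorem exists_filler_horn₃₁ (hK : X.KanCond 3 1) (y₀ y₂ y₃ : X _⦋2⦌)
    (h₀₂ : X.δ 1 y₀ = X.δ 0 y₂) (h₀₃ : X.δ 2 y₀ = X.δ 0 y₃) (h₂₃ : X.δ 2 y₂ = X.δ 2 y₃) :
    ∃ z : X _⦋3⦌, X.δ 0 z = y₀ ∧ X.δ 2 z = y₂ ∧ X.δ 3 z = y₃ := by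
  obtain ⟨z, hz⟩ := exists_δ_eq_of_kanCond hK ![y₀, y₀, y₂, y₃] <| by
    intro j k hj hk hjk
    fin_cases j <;> fin_cases k <;> simp [Fin.ext_iff, Fin.lt_def] at hj hk hjk ⊢ <;> assumption
  exact ⟨z, hz 0 (by decide), hz 2 (by decide), hz 3 (by decide)⟩

theorem exists_filler_horn₄₁ (hK : X.KanCond 4 1) (y₀ y₂ y₃ y₄ : X _⦋3⦌)
    (h₀₂ : X.δ 1 y₀ = X.δ 0 y₂) (h₀₃ : X.δ 2 y₀ = X.δ 0 y₃) (h₀₄ : X.δ 3 y₀ = X.δ 0 y₄)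
    (h₂₃ : X.δ 2 y₂ = X.δ 2 y₃) (h₂₄ : X.δ 3 y₂ = X.δ 2 y₄) (h₃₄ : X.δ 3 y₃ = X.δ 3 y₄) :
    ∃ z : X _⦋4⦌, X.δ 0 z = y₀ ∧ X.δ 2 z = y₂ ∧ X.δ 3 z = y₃ ∧ X.δ 4 z = y₄ := by
  obtain ⟨z, hz⟩ := exists_δ_eq_of_kanCond hK ![y₀, y₀, y₂, y₃, y₄] <| by
    intro j k hj hk hjk
    fin_cases j <;> fin_cases k <;> simp [Fin.ext_iff, Fin.lt_def] at hj hk hjk ⊢ <;> assumption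
  exact ⟨z, hz 0 (by decide), hz 2 (by decide), hz 3 (by decide), hz 4 (by decide)⟩

theorem eq_of_δ_eq_horn₃₁ (hK : X.KanCondUnique 3 1) {z z' : X _⦋3⦌}
    (h₀ : X.δ 0 z = X.δ 0 z') (h₂ : X.δ 2 z = X.δ 2 z') (h₃ : X.δ 3 z = X.δ 3 z') : z = z' :=
  eq_of_δ_eq_of_kanCondUnique hK fun j hj ↦ by fin_cases j <;> simp_all

theorem isBigonFrom_σ_zero (x : X _⦋1⦌) : X.IsBigonFrom x x (X.σ 0 x) :=
  ⟨δ_comp_σ_succ_apply_of_eq 1 0 x, δ_comp_σ_self_apply_of_eq 0 0 x,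
    δ_comp_σ_of_gt_apply_of_eq 1 0 2 0 x⟩

namespace IsBigonFrom

variable {x y x' x'' : X _⦋1⦌} {f η₂ η₀ : X _⦋2⦌}

theorem δ_one_eq (hf : X.IsBigonFrom x y f) : X.δ 1 y = X.δ 1 x := by
  rw [← hf.2.1, ← δ_comp_δ_apply_of_eq 0 1 2 0 f, hf.2.2, δ_comp_σ_self_apply_of_eq 0 0]

theorem existsUnique_composite_filler (hK : X.KanCondUnique 3 1)
    (hη₂ : X.IsBigonFrom x x' η₂) (hη₀ : X.IsBigonFrom x' x'' η₀) :
    ∃! θ : X _⦋3⦌, X.δ 0 θ = η₀ ∧ X.δ 2 θ = η₂ ∧ X.δ 3 θ = X.σ 0 (X.σ 0 (X.δ 1 x)) := by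
  obtain ⟨θ, hθ⟩ := exists_filler_horn₃₁ hK.kanCond η₀ η₂ (X.σ 0 (X.σ 0 (X.δ 1 x)))
    (by rw [hη₀.1, hη₂.2.1])
    (by rw [hη₀.2.2, hη₂.δ_one_eq, δ_comp_σ_self_apply_of_eq 0 0])
    (by rw [hη₂.2.2, δ_comp_σ_of_gt_apply_of_eq 1 0 2 0, δ_comp_σ_succ_apply_of_eq 1 0])
  refine ⟨θ, hθ, fun θ' hθ' ↦ eq_of_δ_eq_horn₃₁ hK ?_ ?_ ?_⟩
  · rw [hθ'.1, hθ.1]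
  · rw [hθ'.2.1, hθ.2.1]
  · rw [hθ'.2.2, hθ.2.2]

theorem isBigonFrom_δ_one (hη₂ : X.IsBigonFrom x x' η₂) (hη₀ : X.IsBigonFrom x' x'' η₀)
    {θ : X _⦋3⦌} (h₀ : X.δ 0 θ = η₀) (h₂ : X.δ 2 θ = η₂)
    (h₃ : X.δ 3 θ = X.σ 0 (X.σ 0 (X.δ 1 x))) : X.IsBigonFrom x x'' (X.δ 1 θ) := by
  refine ⟨?_, ?_, ?_⟩
  · rw [← δ_comp_δ_apply_of_eq 1 1 2 1 θ, h₂, hη₂.1]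
  · rw [δ_comp_δ_apply_of_eq 0 0 1 0 θ, h₀, hη₀.2.1]
  · rw [← δ_comp_δ_apply_of_eq 1 2 3 1 θ, h₃, δ_comp_σ_succ_apply_of_eq 1 0]

theorem isBigonComp_σ_zero_left (hf : X.IsBigonFrom x y f) :
    X.IsBigonComp (X.σ 0 x) f f := by
  refine ⟨X.σ 0 f, δ_comp_σ_self_apply_of_eq 0 0 f, ?_, ?_, δ_comp_σ_succ_apply_of_eq 1 0 f⟩
  · rw [δ_comp_σ_of_gt_apply_of_eq 1 0 2 0, hf.1]
  · rw [δ_comp_σ_of_gt_apply_of_eq 2 0 3 0, hf.2.2, δ_comp_σ_succ_apply_of_eq 1 0]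

theorem isBigonComp_σ_zero_right (hf : X.IsBigonFrom x y f) :
    X.IsBigonComp f (X.σ 0 y) f := by
  refine ⟨X.σ 1 f, ?_, δ_comp_σ_succ_apply_of_eq 2 1 f, ?_, δ_comp_σ_self_apply_of_eq 1 1 f⟩
  · rw [δ_comp_σ_of_le_apply_of_eq 0 0 0 1, hf.2.1]
  · rw [δ_comp_σ_of_gt_apply_of_eq 2 1 3 1, hf.2.2, hf.1, ← σ_comp_σ_apply_of_eq 0 0 0 1]

theorem exists_retraction (hK : X.KanCond 3 0) (hf : X.IsBigonFrom x y f) :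
    ∃ g : X _⦋2⦌, X.IsBigonFrom y x g ∧ X.IsBigonComp f g (X.σ 0 x) := by
  obtain ⟨θ, h₁, h₂, h₃⟩ := exists_filler_horn₃₀ hK (X.σ 0 x) f (X.σ 0 (X.σ 0 (X.δ 1 x)))
    (by rw [δ_comp_σ_succ_apply_of_eq 1 0, hf.1])
    (by rw [δ_comp_σ_of_gt_apply_of_eq 1 0 2 0, δ_comp_σ_succ_apply_of_eq 1 0])
    (by rw [hf.2.2, δ_comp_σ_of_gt_apply_of_eq 1 0 2 0, δ_comp_σ_succ_apply_of_eq 1 0])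
  refine ⟨X.δ 0 θ, ⟨?_, ?_, ?_⟩, θ, rfl, h₂, by rw [h₃, hf.1], h₁⟩
  · rw [← δ_comp_δ_apply_of_eq 0 1 2 0 θ, h₂, hf.2.1]
  · rw [← δ_comp_δ_apply_of_eq 0 0 1 0 θ, h₁, δ_comp_σ_self_apply_of_eq 0 0]
  · rw [← δ_comp_δ_apply_of_eq 0 2 3 0 θ, h₃, δ_comp_σ_self_apply_of_eq 0 0, hf.δ_one_eq]

end IsBigonFrom

theorem isBigonComp_assoc (hK₄ : X.KanCond 4 1) (hK₃ : X.KanCondUnique 3 1)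
    {x y z : X _⦋1⦌} {f g h p q r s : X _⦋2⦌}
    (hf : X.IsBigonFrom x y f) (hg : X.IsBigonFrom y z g)
    (hp : X.IsBigonComp f g p) (hq : X.IsBigonComp g h q)
    (hr : X.IsBigonComp p h r) (hs : X.IsBigonComp f q s) : r = s := by
  obtain ⟨θp, hp₀, hp₂, hp₃, hp₁⟩ := hp
  obtain ⟨θq, hq₀, hq₂, hq₃, hq₁⟩ := hq
  obtain ⟨θr, hr₀, hr₂, hr₃, hr₁⟩ := hr
  obtain ⟨θs, hs₀, hs₂, hs₃, hs₁⟩ := hs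
  have hf₁ : X.δ 1 (X.δ 1 f) = X.δ 1 x := by rw [hf.1]
  have hg₁ : X.δ 1 (X.δ 1 g) = X.δ 1 x := by rw [hg.1, hf.δ_one_eq]
  have hp₁₁ : X.δ 1 (X.δ 1 p) = X.δ 1 x := by
    rw [← hp₁, ← δ_comp_δ_apply_of_eq 1 1 2 1 θp, hp₂, hf.1]
  obtain ⟨Θ, hΘ₀, hΘ₂, hΘ₃, hΘ₄⟩ :=
    exists_filler_horn₄₁ hK₄ θq θs θp (X.σ 0 (X.σ 0 (X.σ 0 (X.δ 1 x))))
      (by rw [hq₁, hs₀]) (by rw [hq₂, hp₀])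
      (by rw [hq₃, hg₁, δ_comp_σ_self_apply_of_eq 0 0]) (by rw [hs₂, hp₂])
      (by rw [hs₃, hf₁, δ_comp_σ_of_gt_apply_of_eq 1 0 2 0, δ_comp_σ_succ_apply_of_eq 1 0])
      (by rw [hp₃, hf₁, δ_comp_σ_of_gt_apply_of_eq 2 0 3 0,
        δ_comp_σ_of_gt_apply_of_eq 1 0 2 0, δ_comp_σ_succ_apply_of_eq 1 0])
  have hΘr : X.δ 1 Θ = θr := by
    refine eq_of_δ_eq_horn₃₁ hK₃ ?_ ?_ ?_
    · rw [δ_comp_δ_apply_of_eq 0 0 1 0 Θ, hΘ₀, hq₀, hr₀]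
    · rw [← δ_comp_δ_apply_of_eq 1 2 3 1 Θ, hΘ₃, hp₁, hr₂]
    · rw [← δ_comp_δ_apply_of_eq 1 3 4 1 Θ, hΘ₄, δ_comp_σ_succ_apply_of_eq 1 0, hr₃, hp₁₁]
  rw [← hr₁, ← hΘr, ← δ_comp_δ_apply_of_eq 1 1 2 1 Θ, hΘ₂, hs₁]

theorem IsBigonFrom.exists_inverse (hK₀ : X.KanCond 3 0) (hK₄ : X.KanCond 4 1)
    (hK₃ : X.KanCondUnique 3 1) {x y : X _⦋1⦌} {f : X _⦋2⦌} (hf : X.IsBigonFrom x y f) :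
    ∃ g : X _⦋2⦌, X.IsBigonFrom y x g ∧
      X.IsBigonComp f g (X.σ 0 x) ∧ X.IsBigonComp g f (X.σ 0 y) := by
  obtain ⟨g, hg, hfg⟩ := hf.exists_retraction hK₀
  obtain ⟨k, hk, hgk⟩ := hg.exists_retraction hK₀
  have hkf : k = f := isBigonComp_assoc hK₄ hK₃ hf hg hfg hgk
    hk.isBigonComp_σ_zero_left hf.isBigonComp_σ_zero_right
  exact ⟨g, hg, hfg, hkf ▸ hgk⟩

end SSet

theorem bigons_form_groupoid_general (X : SSet.{u})
    (h₂ : ∀ (m : ℕ), 3 ≤ m → ∀ j : Fin (m + 1), X.KanCondUnique m j) :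
    -- existence and uniqueness of the composing 3-simplex, and closure of composition
    (∀ (x x' x'' : X _⦋1⦌) (η₂ η₀ : X _⦋2⦌),
      X.IsBigonFrom x x' η₂ → X.IsBigonFrom x' x'' η₀ →
      (∃! θ : X _⦋3⦌, X.δ 0 θ = η₀ ∧ X.δ 2 θ = η₂ ∧
        X.δ 3 θ = X.σ 0 (X.σ 0 (X.δ 1 x))) ∧
      (∀ θ : X _⦋3⦌, X.δ 0 θ = η₀ → X.δ 2 θ = η₂ →
        X.δ 3 θ = X.σ 0 (X.σ 0 (X.δ 1 x)) → X.IsBigonFrom x x'' (X.δ 1 θ))) ∧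
    -- the identity at `x` is a bigon from `x` to `x`
    (∀ x : X _⦋1⦌, X.IsBigonFrom x x (X.σ 0 x)) ∧
    -- associativity
    (∀ (x y z w : X _⦋1⦌) (f g h p q r s : X _⦋2⦌),
      X.IsBigonFrom x y f → X.IsBigonFrom y z g → X.IsBigonFrom z w h →
      X.IsBigonComp f g p → X.IsBigonComp g h q →
      X.IsBigonComp p h r → X.IsBigonComp f q s → r = s) ∧
    -- `s₀ x` is a two-sided unit
    (∀ (x y : X _⦋1⦌) (f : X _⦋2⦌), X.IsBigonFrom x y f →
      X.IsBigonComp (X.σ 0 x) f f ∧ X.IsBigonComp f (X.σ 0 y) f) ∧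
    -- every bigon has a two-sided inverse
    (∀ (x y : X _⦋1⦌) (f : X _⦋2⦌), X.IsBigonFrom x y f →
      ∃ g : X _⦋2⦌, X.IsBigonFrom y x g ∧
        X.IsBigonComp f g (X.σ 0 x) ∧ X.IsBigonComp g f (X.σ 0 y)) := by
  have hK₃₀ : X.KanCond 3 0 := (h₂ 3 le_rfl 0).kanCond
  have hK₄₁ : X.KanCond 4 1 := (h₂ 4 (by norm_num) 1).kanCond
  have hK₃₁ : X.KanCondUnique 3 1 := h₂ 3 le_rfl 1
  refine ⟨fun x x' x'' η₂ η₀ hη₂ hη₀ ↦ ⟨?_, ?_⟩, SSet.isBigonFrom_σ_zero, ?_, ?_, ?_⟩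
  · exact hη₂.existsUnique_composite_filler hK₃₁ hη₀
  · exact fun θ ↦ hη₂.isBigonFrom_δ_one hη₀
  · exact fun x y z w f g h p q r s hf hg _ ↦ SSet.isBigonComp_assoc hK₄₁ hK₃₁ hf hg
  · exact fun x y f hf ↦ ⟨hf.isBigonComp_σ_zero_left, hf.isBigonComp_σ_zero_right⟩
  · exact fun x y f hf ↦ hf.exists_inverse hK₃₀ hK₄₁ hK₃₁

/-- In a 2-groupoid `X`, the bigons form a groupoid with set of objects `X₁`:
the 3-simplex `θ` computing a composite exists and is unique, `d₁ θ` is again a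
morphism between the appropriate 1-simplices, the composition is associative,
the degenerate 2-simplex `s₀ x` is a two-sided unit, and every bigon has a
two-sided inverse. -/
theorem bigons_form_groupoid (X : SSet.{u})
    (h₁ : ∀ (m : ℕ), 1 ≤ m → ∀ j : Fin (m + 1), X.KanCond m j)
    (h₂ : ∀ (m : ℕ), 3 ≤ m → ∀ j : Fin (m + 1), X.KanCondUnique m j) :
    -- existence and uniqueness of the composing 3-simplex, and closure of composition
    (∀ (x x' x'' : X _⦋1⦌) (η₂ η₀ : X _⦋2⦌),
      X.IsBigonFrom x x' η₂ → X.IsBigonFrom x' x'' η₀ →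
      (∃! θ : X _⦋3⦌, X.δ 0 θ = η₀ ∧ X.δ 2 θ = η₂ ∧
        X.δ 3 θ = X.σ 0 (X.σ 0 (X.δ 1 x))) ∧
      (∀ θ : X _⦋3⦌, X.δ 0 θ = η₀ → X.δ 2 θ = η₂ →
        X.δ 3 θ = X.σ 0 (X.σ 0 (X.δ 1 x)) → X.IsBigonFrom x x'' (X.δ 1 θ))) ∧
    -- the identity at `x` is a bigon from `x` to `x`
    (∀ x : X _⦋1⦌, X.IsBigonFrom x x (X.σ 0 x)) ∧
    -- associativity
    (∀ (x y z w : X _⦋1⦌) (f g h p q r s : X _⦋2⦌),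
      X.IsBigonFrom x y f → X.IsBigonFrom y z g → X.IsBigonFrom z w h →
      X.IsBigonComp f g p → X.IsBigonComp g h q →
      X.IsBigonComp p h r → X.IsBigonComp f q s → r = s) ∧
    -- `s₀ x` is a two-sided unit
    (∀ (x y : X _⦋1⦌) (f : X _⦋2⦌), X.IsBigonFrom x y f →
      X.IsBigonComp (X.σ 0 x) f f ∧ X.IsBigonComp f (X.σ 0 y) f) ∧
    -- every bigon has a two-sided inverse
    (∀ (x y : X _⦋1⦌) (f : X _⦋2⦌), X.IsBigonFrom x y f →
      ∃ g : X _⦋2⦌, X.IsBigonFrom y x g ∧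
        X.IsBigonComp f g (X.σ 0 x) ∧ X.IsBigonComp g f (X.σ 0 y)) :=
  bigons_form_groupoid_general X h₂
end

section
/- Let X be a simplicial set satisfying Kan(m,j) for all m ≥ 1 and 0 ≤ j ≤ m, and Kan!(m,j) for all m ≥ 3 and 0 ≤ j ≤ m (a 2-groupoid). For any η₀, η₁ ∈ X₂ with d₀η₀ = d₀η₁ and d₂η₀ = d₂η₁, there exists a unique γ ∈ X₂ such that some 3-simplex θ ∈ X₃ satisfies d₀θ = η₀, d₁θ = η₁, d₂θ = γ and d₃θ = s₀(d₂η₀). Moreover this γ is a bigon (its d₂-face is degenerate). (This expresses that the right action of the groupoid of bigons on X₂ is free and transitive along the fibres of d₂ × d₀ : X₂ → X₁ × X₁.) -/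
/-!
The faces `η₀`, `η₁` and `s₀ (d₂ η₀)` form a `Λ[3, 2]`-horn, which by `Kan!(3, 2)` has a unique
filler `θ`; then `γ = d₂ θ`, and uniqueness of `γ` comes from uniqueness of `θ`. The simplicial
identities give `d₂ d₂ θ = d₂ d₃ θ = d₂ s₀ (d₂ η₀) = s₀ (d₁ d₂ η₀)`, so `γ` is a bigon.
-/

open CategoryTheory Simplicial

namespace SSet

variable {X : SSet.{u}}

lemma horn₃₂.hom_ext {f g : (Λ[3, 2] : SSet.{u}) ⟶ X} (h₀ : ι₀ ≫ f = ι₀ ≫ g)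
    (h₁ : ι₁ ≫ f = ι₁ ≫ g) (h₃ : ι₃ ≫ f = ι₃ ≫ g) : f = g := by
  refine horn.hom_ext' fun j hj => ?_
  fin_cases j
  exacts [h₀, h₁, absurd rfl hj, h₃]

lemma KanCondUnique.existsUnique_horn₃₂ (hX : X.KanCondUnique 3 2) (f₀ f₁ f₃ : Δ[2] ⟶ X)
    (h₀₂ : stdSimplex.δ 2 ≫ f₁ = stdSimplex.δ 1 ≫ f₃)
    (h₁₂ : stdSimplex.δ 2 ≫ f₀ = stdSimplex.δ 0 ≫ f₃)
    (h₂₃ : stdSimplex.δ 0 ≫ f₀ = stdSimplex.δ 0 ≫ f₁) :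
    ∃! σ : Δ[3] ⟶ X,
      stdSimplex.δ 0 ≫ σ = f₀ ∧ stdSimplex.δ 1 ≫ σ = f₁ ∧ stdSimplex.δ 3 ≫ σ = f₃ := by
  obtain ⟨σ, hσ, huniq⟩ := hX (horn₃₂.desc f₀ f₁ f₃ h₀₂ h₁₂ h₂₃)
  have faces (j : Fin 4) (hj : j ≠ 2) :
      stdSimplex.δ j ≫ σ = horn.ι 2 j hj ≫ horn₃₂.desc f₀ f₁ f₃ h₀₂ h₁₂ h₂₃ := by
    rw [hσ, horn.ι_ι_assoc]
  refine ⟨σ, by simp [faces], fun τ ⟨hτ₀, hτ₁, hτ₃⟩ => huniq τ (horn₃₂.hom_ext ?_ ?_ ?_)⟩ <;>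
    simp [hτ₀, hτ₁, hτ₃]

lemma KanCondUnique.existsUnique_simplex_of_faces (hX : X.KanCondUnique 3 2)
    {x₀ x₁ x₃ : X _⦋2⦌} (h₀₂ : X.δ 2 x₁ = X.δ 1 x₃) (h₁₂ : X.δ 2 x₀ = X.δ 0 x₃)
    (h₂₃ : X.δ 0 x₀ = X.δ 0 x₁) :
    ∃! θ : X _⦋3⦌, X.δ 0 θ = x₀ ∧ X.δ 1 θ = x₁ ∧ X.δ 3 θ = x₃ := by
  have hyoneda (y : X _⦋2⦌) (j : Fin 4) (σ : Δ[3] ⟶ X) :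
      stdSimplex.δ j ≫ σ = yonedaEquiv.symm y ↔ X.δ j (yonedaEquiv σ) = y := by
    rw [Equiv.eq_symm_apply, stdSimplex.yonedaEquiv_δ_comp]
  refine (Equiv.existsUnique_congr yonedaEquiv fun σ => ?_).mp
    (hX.existsUnique_horn₃₂ (yonedaEquiv.symm x₀) (yonedaEquiv.symm x₁) (yonedaEquiv.symm x₃)
      ?_ ?_ ?_)
  · simp only [hyoneda]
  all_goals simpa only [stdSimplex.δ_comp_yonedaEquiv_symm, Equiv.apply_eq_iff_eq]

lemma δ_two_δ_two_eq_σ_zero_of_δ_three_eq_σ_zero {θ : X _⦋3⦌} {e : X _⦋1⦌}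
    (h : X.δ 3 θ = X.σ 0 e) : X.δ 2 (X.δ 2 θ) = X.σ 0 (X.δ 1 e) := by
  rw [δ_comp_δ_self'_apply (i := 2) (j := 2) rfl]
  exact (congrArg (X.δ 2) h).trans (δ_comp_σ_of_gt_apply (i := 1) (j := 0) (by decide) e)

end SSet

theorem bigon_action_free_transitive_general (X : SSet.{u})
    (h₂ : ∀ (m : ℕ), 3 ≤ m → ∀ j : Fin (m + 1), X.KanCondUnique m j)
    (η₀ η₁ : X _⦋2⦌)
    (e₀ : X.δ 0 η₀ = X.δ 0 η₁)
    (e₂ : X.δ 2 η₀ = X.δ 2 η₁) :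
    (∃! γ : X _⦋2⦌, ∃ θ : X _⦋3⦌,
      X.δ 0 θ = η₀ ∧ X.δ 1 θ = η₁ ∧ X.δ 2 θ = γ ∧ X.δ 3 θ = X.σ 0 (X.δ 2 η₀)) ∧
    (∀ γ : X _⦋2⦌, (∃ θ : X _⦋3⦌,
      X.δ 0 θ = η₀ ∧ X.δ 1 θ = η₁ ∧ X.δ 2 θ = γ ∧ X.δ 3 θ = X.σ 0 (X.δ 2 η₀)) →
      ∃ v : X _⦋0⦌, X.δ 2 γ = X.σ 0 v) := by
  obtain ⟨θ, ⟨hθ₀, hθ₁, hθ₃⟩, hθ_unique⟩ :=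
    (h₂ 3 le_rfl 2).existsUnique_simplex_of_faces (x₃ := X.σ 0 (X.δ 2 η₀))
      (by rw [← e₂]; exact (SSet.δ_comp_σ_succ_apply 0 _).symm)
      (SSet.δ_comp_σ_self_apply 0 _).symm e₀
  refine ⟨⟨X.δ 2 θ, ⟨θ, hθ₀, hθ₁, rfl, hθ₃⟩, ?_⟩, ?_⟩
  · rintro γ ⟨θ', h₀, h₁, rfl, h₃⟩
    rw [hθ_unique θ' ⟨h₀, h₁, h₃⟩]
  · rintro γ ⟨θ', -, -, rfl, h₃⟩
    exact ⟨_, SSet.δ_two_δ_two_eq_σ_zero_of_δ_three_eq_σ_zero h₃⟩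

/-- In a 2-groupoid `X`, for any two 2-simplices `η₀, η₁` with the same `d₀`- and
`d₂`-faces there is a unique `γ ∈ X₂` such that some 3-simplex `θ` has faces
`d₀ θ = η₀`, `d₁ θ = η₁`, `d₂ θ = γ` and `d₃ θ = s₀ (d₂ η₀)`; moreover any such `γ`
is a bigon (its `d₂`-face is degenerate).  This expresses that the right action of
the groupoid of bigons on `X₂` is free and transitive along the fibres of
`d₂ × d₀ : X₂ → X₁ × X₁`. -/
theorem bigon_action_free_transitive (X : SSet.{u})
    (h₁ : ∀ (m : ℕ), 1 ≤ m → ∀ j : Fin (m + 1), X.KanCond m j)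
    (h₂ : ∀ (m : ℕ), 3 ≤ m → ∀ j : Fin (m + 1), X.KanCondUnique m j)
    (η₀ η₁ : X _⦋2⦌)
    (e₀ : X.δ 0 η₀ = X.δ 0 η₁)
    (e₂ : X.δ 2 η₀ = X.δ 2 η₁) :
    (∃! γ : X _⦋2⦌, ∃ θ : X _⦋3⦌,
      X.δ 0 θ = η₀ ∧ X.δ 1 θ = η₁ ∧ X.δ 2 θ = γ ∧ X.δ 3 θ = X.σ 0 (X.δ 2 η₀)) ∧
    (∀ γ : X _⦋2⦌, (∃ θ : X _⦋3⦌,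
      X.δ 0 θ = η₀ ∧ X.δ 1 θ = η₁ ∧ X.δ 2 θ = γ ∧ X.δ 3 θ = X.σ 0 (X.δ 2 η₀)) →
      ∃ v : X _⦋0⦌, X.δ 2 γ = X.σ 0 v) :=
  bigon_action_free_transitive_general X h₂ η₀ η₁ e₀ e₂
end

section
/- Let f : Z → X be a map of simplicial sets such that for every m ≥ 0 the natural map Z_m → hom(∂Δ[m], Z) ×_{hom(∂Δ[m], X)} X_m is surjective. Then for every n ≥ 0 and every n-simplex σ of X there exists a map u : ∂Δ[n] → Z such that f ∘ u equals the restriction of σ to ∂Δ[n]; equivalently, the projection hom(∂Δ[n], Z) ×_{hom(∂Δ[n], X)} X_n → X_n is surjective for every n ≥ 0. -/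
/-!
A map with the right lifting property against all boundary inclusions `∂Δ[m] ⟶ Δ[m]` has it
against every monomorphism, since a monomorphism is a relative cell complex whose cells are
boundary inclusions (attach the missing nondegenerate simplices skeleton by skeleton). Applied
to the monomorphism `∅ ⟶ ∂Δ[n]`, this lifts `bdryRes n σ : ∂Δ[n] ⟶ X` along `f`.
-/

open CategoryTheory Simplicial Opposite

/-- The restriction of an `n`-simplex `σ` of `Z` to the boundary `∂Δ[n]`, i.e. the
composite of the boundary inclusion with the map `Δ[n] ⟶ Z` corresponding to `σ`
under the Yoneda correspondence. -/
def SSet.bdryRes {Z : SSet.{u}} (n : ℕ) (σ : Z _⦋n⦌) : (∂Δ[n] : SSet.{u}) ⟶ Z :=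
  (SSet.boundary.{u} n).ι ≫ (SSet.yonedaEquiv (X := Z) (n := ⦋n⦌)).symm σ

namespace SSet

open HomotopicalAlgebra MorphismProperty

lemma hasLiftingProperty_boundary_ι_of_bdryRes {Z X : SSet.{u}} {f : Z ⟶ X} {m : ℕ}
    (h : ∀ (u : (∂Δ[m] : SSet.{u}) ⟶ Z) (σ : X _⦋m⦌), u ≫ f = bdryRes m σ →
      ∃ τ : Z _⦋m⦌, bdryRes m τ = u ∧ f.app (op ⦋m⦌) τ = σ) :
    HasLiftingProperty (boundary.{u} m).ι f where
  sq_hasLift {u v} sq := by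
    obtain ⟨τ, hτ, hfτ⟩ := h u (yonedaEquiv v) (by simp [bdryRes, sq.w])
    exact ⟨⟨{ l := yonedaEquiv.symm τ
              fac_left := hτ
              fac_right := yonedaEquiv.injective (by simpa [yonedaEquiv_comp] using hfτ) }⟩⟩

lemma llp_rlp_boundary_ι_of_mono {Y₁ Y₂ : SSet.{u}} (i : Y₁ ⟶ Y₂) [Mono i] :
    (ofHoms fun m : ℕ ↦ (boundary.{u} m).ι).rlp.llp i :=
  transfiniteCompositionsOfShape_pushouts_coproducts_le_llp_rlp _ ℕ _
    ((relativeCellComplexOfMono i).transfiniteCompositionOfShape' fun s ↦ .mk s.j).mem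

lemma exists_comp_eq_of_hasLiftingProperty_boundary_ι {Z X Y : SSet.{u}} {f : Z ⟶ X}
    (hf : ∀ m : ℕ, HasLiftingProperty (boundary.{u} m).ι f) (v : Y ⟶ X) :
    ∃ u : Y ⟶ Z, u ≫ f = v := by
  have hrlp : (ofHoms fun m : ℕ ↦ (boundary.{u} m).ι).rlp f := by
    rintro _ _ _ ⟨m⟩
    exact hf m
  have : HasLiftingProperty (⊥ : Y.Subcomplex).ι f :=
    llp_rlp_boundary_ι_of_mono (⊥ : Y.Subcomplex).ι _ hrlp
  have sq : CommSq ((Subcomplex.isInitialBot (X := Y)).to Z) (⊥ : Y.Subcomplex).ι f v :=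
    ⟨(Subcomplex.isInitialBot (X := Y)).hom_ext _ _⟩
  exact ⟨sq.lift, sq.fac_right⟩

end SSet

/-- If for every `m ≥ 0` the natural map
`Z_m → hom(∂Δ[m], Z) ×_{hom(∂Δ[m], X)} X_m` is surjective, then for every `n` and
every `n`-simplex `σ` of `X` there is a map `u : ∂Δ[n] ⟶ Z` with `f ∘ u` equal to
the restriction of `σ` to the boundary; i.e. the projection
`hom(∂Δ[n], Z) ×_{hom(∂Δ[n], X)} X_n → X_n` is surjective. -/
theorem bdry_lift_surjective {Z X : SSet.{u}} (f : Z ⟶ X)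
    (h : ∀ (m : ℕ) (u : (∂Δ[m] : SSet.{u}) ⟶ Z) (σ : X _⦋m⦌), u ≫ f = SSet.bdryRes m σ →
      ∃ τ : Z _⦋m⦌, SSet.bdryRes m τ = u ∧ f.app (op ⦋m⦌) τ = σ) :
    ∀ (n : ℕ) (σ : X _⦋n⦌), ∃ u : (∂Δ[n] : SSet.{u}) ⟶ Z, u ≫ f = SSet.bdryRes n σ :=
  fun n σ ↦ SSet.exists_comp_eq_of_hasLiftingProperty_boundary_ι
    (fun m ↦ SSet.hasLiftingProperty_boundary_ι_of_bdryRes (h m)) (SSet.bdryRes n σ)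
end
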